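/- Fix α ∈ ℝ, n, N ∈ ℕ, center vectors v^1,…,v^N ∈ ℝⁿ, and weights w ∈ ℝ^{n×N}. Let x : ℝ → ℝⁿ be differentiable and suppose each coordinate satisfies x_i'(t) = Σ_{k=1}^N w_{ik} Λ^α_{v^k}(x(t)) for all t. Then for every l ∈ {1,…,N}, d/dt Λ^α_{v^l}(x(t)) = Σ_{i=1}^n Σ_{k=1}^N α · (1 − λ_{α,v^l_i}(x_i(t))) · w_{ik} · Λ^α_{v^l}(x(t)) · Λ^α_{v^k}(x(t)). -/

import Mathlib

/-- The logistic function with steepness `α` and center `μ`. -/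
noncomputable def logistic (α μ x : ℝ) : ℝ := 1 / (1 + Real.exp (-α * (x - μ)))

/-- The multivariate conjunctive logistic function with center vector `v`. -/
noncomputable def mvLogistic {n : ℕ} (α : ℝ) (v x : Fin n → ℝ) : ℝ :=
  ∏ i, logistic α (v i) (x i)

/-!
The logistic function is a rescaled sigmoid, so `λ' = α (1 - λ) λ`. Differentiating the product
`Λ^α_{vˡ}(x(t)) = ∏ᵢ λ_{α,vˡᵢ}(xᵢ(t))` by the product rule, the `i`-th term is
`α (1 - λᵢ) ẋᵢ Λ^α_{vˡ}`, and substituting the dictionary expansion of `ẋᵢ` gives the claim.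
-/

open Real

theorem logistic_eq_sigmoid (α μ x : ℝ) : logistic α μ x = sigmoid (α * (x - μ)) := by
  rw [logistic, sigmoid_def, one_div, neg_mul]

theorem hasDerivAt_logistic (α μ y : ℝ) :
    HasDerivAt (logistic α μ) (α * (1 - logistic α μ y) * logistic α μ y) y := by
  have hlin : HasDerivAt (fun x : ℝ => α * (x - μ)) α y := by
    simpa using ((hasDerivAt_id y).sub_const μ).const_mul α
  have h := (hasDerivAt_sigmoid (α * (y - μ))).comp y hlin
  rw [show logistic α μ = sigmoid ∘ fun x => α * (x - μ) from funext (logistic_eq_sigmoid α μ)]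
  exact h.congr_deriv (by simp only [Function.comp_apply]; ring)

theorem HasDerivAt.logistic {f : ℝ → ℝ} {f' t : ℝ} (α μ : ℝ) (hf : HasDerivAt f f' t) :
    HasDerivAt (fun s => _root_.logistic α μ (f s))
      (α * (1 - _root_.logistic α μ (f t)) * _root_.logistic α μ (f t) * f') t :=
  (hasDerivAt_logistic α μ (f t)).comp t hf

theorem HasDerivAt.mvLogistic {n : ℕ} {x : ℝ → Fin n → ℝ} {x' : Fin n → ℝ} {t : ℝ}
    (α : ℝ) (v : Fin n → ℝ) (hx : ∀ i, HasDerivAt (fun s => x s i) (x' i) t) :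
    HasDerivAt (fun s => _root_.mvLogistic α v (x s))
      (∑ i, α * (1 - _root_.logistic α (v i) (x t i)) * x' i * _root_.mvLogistic α v (x t)) t := by
  have hprod := HasDerivAt.fun_finsetProd (u := Finset.univ)
    (fun i _ => (hx i).logistic α (v i))
  refine hprod.congr_deriv (Finset.sum_congr rfl fun i _ => ?_)
  rw [_root_.mvLogistic, ← Finset.mul_prod_erase _ _ (Finset.mem_univ i), smul_eq_mul]
  ring

theorem mvLogistic_deriv_sill_general {n N : ℕ} (α : ℝ) (v : Fin N → Fin n → ℝ)
    (w : Fin n → Fin N → ℝ) (x : ℝ → (Fin n → ℝ))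
    (hx : ∀ (t : ℝ) (i : Fin n),
      HasDerivAt (fun s => x s i) (∑ k, w i k * mvLogistic α (v k) (x t)) t) :
    ∀ (l : Fin N) (t : ℝ), HasDerivAt (fun s => mvLogistic α (v l) (x s))
      (∑ i, ∑ k, α * (1 - logistic α (v l i) (x t i)) * w i k
        * mvLogistic α (v l) (x t) * mvLogistic α (v k) (x t)) t := by
  intro l t
  refine (HasDerivAt.mvLogistic α (v l) (hx t)).congr_deriv
    (Finset.sum_congr rfl fun i _ => ?_)
  rw [Finset.mul_sum, Finset.sum_mul]
  exact Finset.sum_congr rfl fun k _ => by ring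

/-- If each coordinate of the state satisfies
`ẋᵢ = Σₖ w_{ik} Λ^α_{vᵏ}(x)`, then for every dictionary index `l`,
`d/dt Λ^α_{vˡ}(x(t)) = Σᵢ Σₖ α (1 - λ_{α,vˡᵢ}(xᵢ(t))) w_{ik} Λ^α_{vˡ}(x(t)) Λ^α_{vᵏ}(x(t))`. -/
theorem mvLogistic_deriv_sill {n N : ℕ} (α : ℝ) (v : Fin N → Fin n → ℝ)
    (w : Fin n → Fin N → ℝ) (x : ℝ → (Fin n → ℝ)) (hdiff : Differentiable ℝ x)
    (hx : ∀ (t : ℝ) (i : Fin n),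
      HasDerivAt (fun s => x s i) (∑ k, w i k * mvLogistic α (v k) (x t)) t) :
    ∀ (l : Fin N) (t : ℝ), HasDerivAt (fun s => mvLogistic α (v l) (x s))
      (∑ i, ∑ k, α * (1 - logistic α (v l i) (x t i)) * w i k
        * mvLogistic α (v l) (x t) * mvLogistic α (v k) (x t)) t :=
  mvLogistic_deriv_sill_general α v w x hx
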